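/- arXiv:1810.08547 — 8 statements merged into one kernel-verified Lean document; each statement's English description precedes it below -/
import Mathlib

section
/- Let H ⊆ ℝ be a bounded Lebesgue measurable set with λ(H) > 0. Then sup{x ∈ ℝ : λ(H ∩ [x, ∞)) > 0 and Avg(H ∩ [x, ∞)) = Avg(H)} = sup{x ∈ ℝ : λ(H ∩ (−∞, x]) = 0}, and dually inf{x ∈ ℝ : λ(H ∩ (−∞, x]) > 0 and Avg(H ∩ (−∞, x]) = Avg(H)} = inf{x ∈ ℝ : λ(H ∩ [x, ∞)) = 0}. -/
/-!
If `x` cuts `H` into two pieces `H ∩ (-∞, x]` and `H ∩ [x, ∞)` of positive measure, the mean of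
the lower piece is `< x`, that of the upper piece is `> x`, and the mean of `H` is a proper convex
combination of the two, hence strictly between them. So the upper piece has the mean of `H` only
when the lower piece is null; conversely, if the lower piece is null, the upper one is `H` up to a
null set. The sets whose bounds are compared are therefore equal, and dually.
-/

open MeasureTheory Set

/-- The mean `Avg` by Lebesgue measure. -/
noncomputable def avg (H : Set ℝ) : ℝ := (∫ x in H, x) / (volume H).toReal

lemma avg_eq_setAverage (s : Set ℝ) : avg s = ⨍ y in s, y := by
  rw [setAverage_eq, smul_eq_mul, avg, measureReal_def, div_eq_inv_mul]

lemma inter_Ici_ae_eq_self {α : Type*} [LinearOrder α] [MeasurableSpace α] {μ : Measure α}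
    {s : Set α} {x : α} (h : μ (s ∩ Iic x) = 0) : (s ∩ Ici x : Set α) =ᵐ[μ] s := by
  refine ae_eq_set.2 ⟨?_, measure_mono_null ?_ h⟩
  · rw [sdiff_eq_empty.2 inter_subset_left, measure_empty]
  · exact fun y ⟨hy, hyx⟩ ↦ ⟨hy, le_of_not_ge fun hxy ↦ hyx ⟨hy, hxy⟩⟩

lemma inter_Iic_ae_eq_self {α : Type*} [LinearOrder α] [MeasurableSpace α] {μ : Measure α}
    {s : Set α} {x : α} (h : μ (s ∩ Ici x) = 0) : (s ∩ Iic x : Set α) =ᵐ[μ] s :=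
  inter_Ici_ae_eq_self (α := αᵒᵈ) h

section

variable {μ : Measure ℝ} [NullSingletonClass μ] {s : Set ℝ} {x : ℝ}

lemma setAverage_lt_of_subset_Iic (hsx : s ⊆ Iic x) (h₀ : μ s ≠ 0) (hs : μ s ≠ ⊤)
    (hint : IntegrableOn (fun y ↦ y) s μ) : ⨍ y in s, y ∂μ < x := by
  by_contra! hx
  refine (measure_setAverage_le_pos h₀ hs hint).ne' (measure_mono_null ?_ (measure_singleton x))
  exact fun y ⟨hy, hay⟩ ↦ le_antisymm (hsx hy) (hx.trans hay)

lemma lt_setAverage_of_subset_Ici (hsx : s ⊆ Ici x) (h₀ : μ s ≠ 0) (hs : μ s ≠ ⊤)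
    (hint : IntegrableOn (fun y ↦ y) s μ) : x < ⨍ y in s, y ∂μ := by
  by_contra! hx
  refine (measure_le_setAverage_pos h₀ hs hint).ne' (measure_mono_null ?_ (measure_singleton x))
  exact fun y ⟨hy, hya⟩ ↦ le_antisymm (hya.trans hx) (hsx hy)

lemma setAverage_mem_Ioo_of_split (hm : NullMeasurableSet s μ) (hs : μ s ≠ ⊤)
    (hint : IntegrableOn (fun y ↦ y) s μ) (hIic : μ (s ∩ Iic x) ≠ 0)
    (hIci : μ (s ∩ Ici x) ≠ 0) :
    ⨍ y in s, y ∂μ ∈ Ioo (⨍ y in s ∩ Iic x, y ∂μ) (⨍ y in s ∩ Ici x, y ∂μ) := by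
  have hfin {t : Set ℝ} : μ (s ∩ t) ≠ ⊤ := measure_ne_top_of_subset inter_subset_left hs
  have hint' {t : Set ℝ} : IntegrableOn (fun y ↦ y) (s ∩ t) μ := hint.mono_set inter_subset_left
  have hlt : ⨍ y in s ∩ Iic x, y ∂μ < ⨍ y in s ∩ Ici x, y ∂μ :=
    (setAverage_lt_of_subset_Iic inter_subset_right hIic hfin hint').trans
      (lt_setAverage_of_subset_Ici inter_subset_right hIci hfin hint')
  have hdisj : AEDisjoint μ (s ∩ Iic x) (s ∩ Ici x) :=
    measure_mono_null (fun y ⟨⟨_, hyx⟩, ⟨_, hxy⟩⟩ ↦ le_antisymm hyx hxy) (measure_singleton x)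
  have hsplit : s ∩ Iic x ∪ s ∩ Ici x = s := by
    rw [← inter_union_distrib_left, Iic_union_Ici, inter_univ]
  rw [← openSegment_eq_Ioo hlt]
  simpa only [hsplit] using average_union_mem_openSegment hdisj
    (hm.inter measurableSet_Ici.nullMeasurableSet) hIic hIci hfin hfin hint' hint'

lemma setOf_setAverage_inter_Ici_eq (hm : NullMeasurableSet s μ) (hs : μ s ≠ ⊤)
    (hint : IntegrableOn (fun y ↦ y) s μ) (hpos : 0 < μ s) :
    {x | 0 < μ (s ∩ Ici x) ∧ ⨍ y in s ∩ Ici x, y ∂μ = ⨍ y in s, y ∂μ} =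
      {x | μ (s ∩ Iic x) = 0} := by
  ext x
  refine ⟨fun ⟨hIci, havg⟩ ↦ ?_, fun hIic ↦ ?_⟩
  · by_contra hIic
    exact (setAverage_mem_Ioo_of_split hm hs hint hIic hIci.ne').2.ne havg.symm
  · have hae := inter_Ici_ae_eq_self hIic
    exact ⟨(measure_congr hae).symm ▸ hpos, setAverage_congr hae⟩

lemma setOf_setAverage_inter_Iic_eq (hm : NullMeasurableSet s μ) (hs : μ s ≠ ⊤)
    (hint : IntegrableOn (fun y ↦ y) s μ) (hpos : 0 < μ s) :
    {x | 0 < μ (s ∩ Iic x) ∧ ⨍ y in s ∩ Iic x, y ∂μ = ⨍ y in s, y ∂μ} =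
      {x | μ (s ∩ Ici x) = 0} := by
  ext x
  refine ⟨fun ⟨hIic, havg⟩ ↦ ?_, fun hIci ↦ ?_⟩
  · by_contra hIci
    exact (setAverage_mem_Ioo_of_split hm hs hint hIic.ne' hIci).1.ne' havg.symm
  · have hae := inter_Iic_ae_eq_self hIci
    exact ⟨(measure_congr hae).symm ▸ hpos, setAverage_congr hae⟩

end

theorem liminf_limsup_avg_eq (H : Set ℝ)
    (hb : Bornology.IsBounded H) (hm : MeasurableSet H) (hpos : 0 < volume H) :
    sSup {x : ℝ | 0 < volume (H ∩ Set.Ici x) ∧ avg (H ∩ Set.Ici x) = avg H} =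
      sSup {x : ℝ | volume (H ∩ Set.Iic x) = 0} ∧
    sInf {x : ℝ | 0 < volume (H ∩ Set.Iic x) ∧ avg (H ∩ Set.Iic x) = avg H} =
      sInf {x : ℝ | volume (H ∩ Set.Ici x) = 0} := by
  have hs : volume H ≠ ⊤ := hb.measure_lt_top.ne
  have hint : IntegrableOn (fun y ↦ y) H :=
    (continuous_id.continuousOn.integrableOn_compact hb.isCompact_closure).mono_set subset_closure
  simp only [avg_eq_setAverage]
  rw [setOf_setAverage_inter_Ici_eq hm.nullMeasurableSet hs hint hpos,
    setOf_setAverage_inter_Iic_eq hm.nullMeasurableSet hs hint hpos]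
  exact ⟨rfl, rfl⟩
end

section
/- Let K : Set ℝ → ℝ and let H ⊆ ℝ be nonempty and bounded. Suppose the map x ↦ K(H ∩ [x, ∞)) is continuous on ℝ (slice-continuity from below). Let α = sup{x ∈ ℝ : H ∩ [x,∞) ≠ ∅ and K(H ∩ [x,∞)) = K(H)}. Then K(H ∩ [α, ∞)) = K(H). Dually, if x ↦ K(H ∩ (−∞, x]) is continuous on ℝ and β = inf{x ∈ ℝ : H ∩ (−∞,x] ≠ ∅ and K(H ∩ (−∞,x]) = K(H)}, then K(H ∩ (−∞, β]) = K(H). -/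
theorem slice_continuous_mean_attains (K : Set ℝ → ℝ)
    (H : Set ℝ) (hne : H.Nonempty) (hb : Bornology.IsBounded H) :
    (Continuous (fun x : ℝ => K (H ∩ Set.Ici x)) →
      K (H ∩ Set.Ici (sSup {x : ℝ | (H ∩ Set.Ici x).Nonempty ∧
        K (H ∩ Set.Ici x) = K H})) = K H) ∧
    (Continuous (fun x : ℝ => K (H ∩ Set.Iic x)) →
      K (H ∩ Set.Iic (sInf {x : ℝ | (H ∩ Set.Iic x).Nonempty ∧
        K (H ∩ Set.Iic x) = K H})) = K H) := by
  obtain ⟨m, hm⟩ : BddBelow H := hb.bddBelow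
  obtain ⟨M, hM⟩ : BddAbove H := hb.bddAbove
  constructor
  · intro hc
    set S := {x : ℝ | (H ∩ Set.Ici x).Nonempty ∧ K (H ∩ Set.Ici x) = K H} with hS
    have hSne : S.Nonempty := by
      refine ⟨m, ?_, ?_⟩ <;>
      · have : H ∩ Set.Ici m = H := by
          apply Set.inter_eq_left.2
          intro y hy; exact hm hy
        simp [this, hne]
    have hSbdd : BddAbove S := by
      refine ⟨M, fun x hx => ?_⟩
      obtain ⟨⟨y, hyH, hyx⟩, -⟩ := hx
      exact le_trans hyx (hM hyH)
    have hclosed : IsClosed {x : ℝ | K (H ∩ Set.Ici x) = K H} :=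
      isClosed_eq hc continuous_const
    have hsub : S ⊆ {x : ℝ | K (H ∩ Set.Ici x) = K H} := fun x hx => hx.2
    have : sSup S ∈ {x : ℝ | K (H ∩ Set.Ici x) = K H} := by
      have h1 : sSup S ∈ closure S := csSup_mem_closure hSne hSbdd
      exact hclosed.closure_subset (closure_mono hsub h1)
    exact this
  · intro hc
    set S := {x : ℝ | (H ∩ Set.Iic x).Nonempty ∧ K (H ∩ Set.Iic x) = K H} with hS
    have hSne : S.Nonempty := by
      refine ⟨M, ?_, ?_⟩ <;>
      · have : H ∩ Set.Iic M = H := by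
          apply Set.inter_eq_left.2
          intro y hy; exact hM hy
        simp [this, hne]
    have hSbdd : BddBelow S := by
      refine ⟨m, fun x hx => ?_⟩
      obtain ⟨⟨y, hyH, hyx⟩, -⟩ := hx
      exact le_trans (hm hyH) hyx
    have hclosed : IsClosed {x : ℝ | K (H ∩ Set.Iic x) = K H} :=
      isClosed_eq hc continuous_const
    have hsub : S ⊆ {x : ℝ | K (H ∩ Set.Iic x) = K H} := fun x hx => hx.2
    have : sInf S ∈ {x : ℝ | K (H ∩ Set.Iic x) = K H} := by
      have h1 : sInf S ∈ closure S := csInf_mem_closure hSne hSbdd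
      exact hclosed.closure_subset (closure_mono hsub h1)
    exact this
end

section
/- Let a < b be reals and 0 < h < b − a. Then for every Lebesgue measurable set H ⊆ [a, b] with λ(H) = h one has a + h/2 ≤ Avg(H) ≤ b − h/2; moreover Avg([a, a+h]) = a + h/2 and Avg([b−h, b]) = b − h/2, so these bounds are the minimum and maximum of Avg over all Lebesgue measurable H ⊆ [a,b] with λ(H) = h. -/
open MeasureTheory

/-!
A bathtub argument. If `vol H = vol I < ∞`, then `H \ I` and `I \ H` have the same measure, so
`∫_H f - ∫_I f = ∫_{H \ I} f - ∫_{I \ H} f`, which is nonnegative as soon as `f ≥ c` on `H \ I`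
and `f ≤ c` on `I \ H`. With `f = id`, `I = [a, a + h]` and `c = a + h`, this shows that among
the subsets of `[a, ∞)` of measure `h` the interval `[a, a + h]` has the smallest mean;
symmetrically `[b - h, b]` has the largest mean among the subsets of `(-∞, b]`.
-/

open Set

section Bathtub

variable {α : Type*} [MeasurableSpace α] {μ : Measure α} {f : α → ℝ} {s t : Set α} {c : ℝ}

theorem setIntegral_le_setIntegral_of_measure_eq (hs : MeasurableSet s) (ht : MeasurableSet t)
    (hst : μ s = μ t) (hfin : μ s ≠ ⊤) (hfs : IntegrableOn f s μ) (hft : IntegrableOn f t μ)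
    (hs_ge : ∀ x ∈ s \ t, c ≤ f x) (ht_le : ∀ x ∈ t \ s, f x ≤ c) :
    ∫ x in t, f x ∂μ ≤ ∫ x in s, f x ∂μ := by
  have hsdiff : μ.real (t \ s) = μ.real (s \ t) := by
    rw [measureReal_def, measureReal_def, measure_sdiff_symm ht.nullMeasurableSet
      hs.nullMeasurableSet hst.symm (measure_ne_top_of_subset inter_subset_right hfin)]
  have ht_sdiff : ∫ x in t \ s, f x ∂μ ≤ c * μ.real (s \ t) := by
    have := setIntegral_mono_on (hft.mono_set sdiff_subset)
      (integrableOn_const (measure_ne_top_of_subset sdiff_subset (hst ▸ hfin))) (ht.diff hs) ht_le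
    rwa [setIntegral_const, smul_eq_mul, mul_comm, hsdiff] at this
  have hs_sdiff : c * μ.real (s \ t) ≤ ∫ x in s \ t, f x ∂μ :=
    setIntegral_ge_of_const_le_real (hs.diff ht) (measure_ne_top_of_subset sdiff_subset hfin)
      hs_ge (hfs.mono_set sdiff_subset)
  calc ∫ x in t, f x ∂μ = ∫ x in s ∩ t, f x ∂μ + ∫ x in t \ s, f x ∂μ := by
        rw [inter_comm, integral_inter_add_sdiff hs hft]
    _ ≤ ∫ x in s ∩ t, f x ∂μ + ∫ x in s \ t, f x ∂μ := by grw [ht_sdiff, hs_sdiff]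
    _ = ∫ x in s, f x ∂μ := integral_inter_add_sdiff ht hfs

end Bathtub

theorem setIntegral_id_Icc {u v : ℝ} (huv : u ≤ v) : ∫ x in Icc u v, x = (v ^ 2 - u ^ 2) / 2 := by
  rw [integral_Icc_eq_integral_Ioc, ← intervalIntegral.integral_of_le huv, integral_id]

theorem avg_Icc {u v : ℝ} (huv : u < v) : avg (Icc u v) = (u + v) / 2 := by
  rw [avg, setIntegral_id_Icc huv.le, Real.volume_Icc, ENNReal.toReal_ofReal (sub_nonneg.2 huv.le)]
  field_simp [sub_ne_zero.2 huv.ne']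
  ring

theorem avg_le_avg_of_setIntegral_le {H I : Set ℝ} (hvol : volume I = volume H)
    (hint : ∫ x in I, x ≤ ∫ x in H, x) : avg I ≤ avg H := by
  rw [avg, avg, hvol]
  gcongr

theorem avg_Icc_le_avg_of_subset_Ici {a h : ℝ} {H : Set ℝ} (hHa : H ⊆ Ici a)
    (hH : MeasurableSet H) (hint : IntegrableOn (fun x => x) H)
    (hvol : volume H = ENNReal.ofReal h) : avg (Icc a (a + h)) ≤ avg H := by
  have hvolI : volume (Icc a (a + h)) = volume H := by
    rw [Real.volume_Icc, hvol, add_sub_cancel_left]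
  refine avg_le_avg_of_setIntegral_le hvolI <|
    setIntegral_le_setIntegral_of_measure_eq (c := a + h) hH measurableSet_Icc hvolI.symm
      (by simp [hvol]) hint continuous_id.integrableOn_Icc ?_ ?_
  · rintro x ⟨hxH, hxI⟩
    by_contra! hx
    exact hxI ⟨hHa hxH, hx.le⟩
  · rintro x ⟨⟨-, hx⟩, -⟩
    exact hx

theorem avg_le_avg_Icc_of_subset_Iic {b h : ℝ} {H : Set ℝ} (hHb : H ⊆ Iic b)
    (hH : MeasurableSet H) (hint : IntegrableOn (fun x => x) H)
    (hvol : volume H = ENNReal.ofReal h) : avg H ≤ avg (Icc (b - h) b) := by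
  have hvolJ : volume (Icc (b - h) b) = volume H := by
    rw [Real.volume_Icc, hvol, sub_sub_cancel]
  refine avg_le_avg_of_setIntegral_le hvolJ.symm <|
    setIntegral_le_setIntegral_of_measure_eq (c := b - h) measurableSet_Icc hH hvolJ
      (by simp [hvolJ, hvol]) continuous_id.integrableOn_Icc hint ?_ ?_
  · rintro x ⟨⟨hx, -⟩, -⟩
    exact hx
  · rintro x ⟨hxH, hxJ⟩
    by_contra! hx
    exact hxJ ⟨hx.le, hHb hxH⟩

theorem avg_min_max_on_subsets_of_Icc_general (a b h : ℝ)
    (hh0 : 0 < h) :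
    (∀ H : Set ℝ, H ⊆ Set.Icc a b → MeasurableSet H →
      volume H = ENNReal.ofReal h →
      a + h / 2 ≤ avg H ∧ avg H ≤ b - h / 2) ∧
    avg (Set.Icc a (a + h)) = a + h / 2 ∧
    avg (Set.Icc (b - h) b) = b - h / 2 := by
  have havg_left : avg (Icc a (a + h)) = a + h / 2 := by
    rw [avg_Icc (by linarith)]
    ring
  have havg_right : avg (Icc (b - h) b) = b - h / 2 := by
    rw [avg_Icc (by linarith)]
    ring
  refine ⟨fun H hHab hH hvol => ?_, havg_left, havg_right⟩
  have hint : IntegrableOn (fun x : ℝ => x) H := continuous_id.integrableOn_Icc.mono_set hHab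
  exact ⟨havg_left ▸ avg_Icc_le_avg_of_subset_Ici (hHab.trans Icc_subset_Ici_self) hH hint hvol,
    havg_right ▸ avg_le_avg_Icc_of_subset_Iic (hHab.trans Icc_subset_Iic_self) hH hint hvol⟩

theorem avg_min_max_on_subsets_of_Icc (a b h : ℝ) (hab : a < b)
    (hh0 : 0 < h) (hhba : h < b - a) :
    (∀ H : Set ℝ, H ⊆ Set.Icc a b → MeasurableSet H →
      volume H = ENNReal.ofReal h →
      a + h / 2 ≤ avg H ∧ avg H ≤ b - h / 2) ∧
    avg (Set.Icc a (a + h)) = a + h / 2 ∧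
    avg (Set.Icc (b - h) b) = b - h / 2 :=
  avg_min_max_on_subsets_of_Icc_general a b h hh0
end

section
/- The mean Avg is not self-accumulated: there exists a bounded Lebesgue measurable set H ⊆ ℝ with λ(H) > 0 such that, writing A = {x ∈ ℝ : for every δ > 0, λ(H ∩ S(x, δ)) > 0} for the set of accumulation points of H by Avg, the set A is bounded, Lebesgue measurable, λ(A) > 0, and Avg(A) ≠ Avg(H). -/
/-!
Take an open set `U ⊆ ℝ` that is dense but has Lebesgue measure at most `1/8` (an open
neighbourhood of a countable dense set), and `H = (0, 1/4) ∪ (U ∩ (1/4, 1))`. Since `H` is open,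
its accumulation points are exactly its closure, which by density of `U` is `[0, 1]`, with
average `1/2`. But the mass of `H` beyond `1/4` is at most `1/8`, which pulls `Avg H` below `1/2`.
-/

open MeasureTheory

open Set Metric

theorem setOf_forall_measure_inter_ball_pos_eq_closure {X : Type*} [PseudoMetricSpace X]
    [MeasurableSpace X] (μ : Measure X) [μ.IsOpenPosMeasure] {H : Set X} (hH : IsOpen H) :
    {x | ∀ δ > 0, 0 < μ (H ∩ ball x δ)} = closure H := by
  ext x
  simp only [mem_ofPred_eq, Metric.mem_closure_iff, (hH.inter isOpen_ball).measure_pos_iff μ,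
    inter_nonempty, mem_ball, dist_comm]

theorem exists_isOpen_dense_measure_lt {X : Type*} [TopologicalSpace X]
    [TopologicalSpace.SeparableSpace X] [MeasurableSpace X] (μ : Measure X) [μ.OuterRegular]
    [NullSingletonClass μ] {ε : ENNReal} (hε : 0 < ε) :
    ∃ U : Set X, IsOpen U ∧ Dense U ∧ μ U < ε := by
  obtain ⟨s, hs_countable, hs_dense⟩ := TopologicalSpace.exists_countable_dense X
  obtain ⟨U, hsU, hU_open, hU_lt⟩ :=
    s.exists_isOpen_lt_of_lt ε (by rwa [hs_countable.measure_zero μ])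
  exact ⟨U, hU_open, hs_dense.mono hsU, hU_lt⟩

theorem Dense.closure_inter_Ioo {U : Set ℝ} (hU : Dense U) {a b : ℝ} (hab : a < b) :
    closure (U ∩ Ioo a b) = Icc a b := by
  refine (closure_mono inter_subset_right).trans_eq (closure_Ioo hab.ne) |>.antisymm ?_
  rw [← closure_Ioo hab.ne, inter_comm]
  exact closure_minimal (hU.open_subset_closure_inter isOpen_Ioo) isClosed_closure

theorem setIntegral_Ioo_id {a b : ℝ} (hab : a ≤ b) :
    ∫ x in Ioo a b, x = (b ^ 2 - a ^ 2) / 2 := by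
  rw [← integral_Ioc_eq_integral_Ioo, ← intervalIntegral.integral_of_le hab, integral_id]

theorem avg_Icc_s10 {a b : ℝ} (hab : a < b) : avg (Icc a b) = (a + b) / 2 := by
  rw [avg, ← measureReal_def, Real.volume_real_Icc_of_le hab.le, integral_Icc_eq_integral_Ioo,
    setIntegral_Ioo_id hab.le]
  field_simp [sub_ne_zero.2 hab.ne']
  ring

theorem avg_Ioo_union_lt_half {V : Set ℝ} (hV_meas : MeasurableSet V) (hV : V ⊆ Ioo (1 / 4) 1)
    (hV_small : volume.real V ≤ 1 / 8) : avg (Ioo 0 (1 / 4) ∪ V) < 1 / 2 := by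
  have hdisj : Disjoint (Ioo (0 : ℝ) (1 / 4)) V :=
    disjoint_left.2 fun x hx hxV => (hV hxV).1.not_gt hx.2
  have hV_fin : volume V ≠ ⊤ := ((measure_mono hV).trans_lt measure_Ioo_lt_top).ne
  have hV_int : ∫ x in V, x ≤ volume.real V := by
    refine (Real.le_norm_self _).trans ((norm_setIntegral_le_of_norm_le_const hV_fin.lt_top
      fun x hx => ?_).trans_eq (one_mul _))
    exact abs_le.2 ⟨by linarith [(hV hx).1], (hV hx).2.le⟩
  have hid : Continuous fun x : ℝ => x := continuous_id
  rw [avg, ← measureReal_def, measureReal_union hdisj hV_meas measure_Ioo_lt_top.ne hV_fin,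
    setIntegral_union hdisj hV_meas (hid.integrableOn_Icc.mono_set Ioo_subset_Icc_self)
      (hid.integrableOn_Icc.mono_set (hV.trans Ioo_subset_Icc_self)),
    Real.volume_real_Ioo_of_le (by norm_num), setIntegral_Ioo_id (by norm_num),
    div_lt_iff₀ (by positivity)]
  linarith

theorem avg_not_selfAccumulated :
    ∃ H : Set ℝ, Bornology.IsBounded H ∧ MeasurableSet H ∧ 0 < volume H ∧
      Bornology.IsBounded {x : ℝ | ∀ δ > 0, 0 < volume (H ∩ Metric.ball x δ)} ∧
      MeasurableSet {x : ℝ | ∀ δ > 0, 0 < volume (H ∩ Metric.ball x δ)} ∧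
      0 < volume {x : ℝ | ∀ δ > 0, 0 < volume (H ∩ Metric.ball x δ)} ∧
      avg {x : ℝ | ∀ δ > 0, 0 < volume (H ∩ Metric.ball x δ)} ≠ avg H := by
  obtain ⟨U, hU_open, hU_dense, hU_small⟩ :=
    exists_isOpen_dense_measure_lt (volume : Measure ℝ) (ε := .ofReal (1 / 8)) (by norm_num)
  set H := Ioo 0 (1 / 4) ∪ U ∩ Ioo (1 / 4) 1
  have hH_open : IsOpen H := isOpen_Ioo.union (hU_open.inter isOpen_Ioo)
  have hH_closure : closure H = Icc 0 1 := by
    rw [closure_union, closure_Ioo (by norm_num), hU_dense.closure_inter_Ioo (by norm_num),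
      Icc_union_Icc_eq_Icc (by norm_num) (by norm_num)]
  refine ⟨H, ?_⟩
  rw [setOf_forall_measure_inter_ball_pos_eq_closure volume hH_open, hH_closure, avg_Icc_s10 one_pos]
  refine ⟨(isBounded_Icc 0 1).subset (hH_closure ▸ subset_closure), hH_open.measurableSet,
    (hH_open.measure_pos_iff volume).2 ⟨1 / 8, Or.inl ⟨by norm_num, by norm_num⟩⟩,
    isBounded_Icc 0 1, measurableSet_Icc, by simp, ?_⟩
  have hV_small : volume.real (U ∩ Ioo (1 / 4) 1) ≤ 1 / 8 :=
    ENNReal.toReal_le_of_le_ofReal (by norm_num)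
      ((measure_mono inter_subset_left).trans hU_small.le)
  exact ((avg_Ioo_union_lt_half (hU_open.inter isOpen_Ioo).measurableSet inter_subset_right
    hV_small).trans_eq (by norm_num)).ne'
end

section
/- Let μ be a measure on ℝ and define, for bounded measurable A ⊆ ℝ with 0 < μ(A) < ∞, the mean K(A) = (∫_A x dμ)/μ(A). Let H, H₁, H₂ ⊆ ℝ be pairwise disjoint bounded measurable sets, each with 0 < μ < ∞. Then |K(H) − K(H ∪ H₁ ∪ H₂)| ≤ |K(H) − K(H ∪ H₁)| + |K(H) − K(H ∪ H₂)| (u-boundedness of the mean by the measure μ). -/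
open MeasureTheory

lemma mean_aux (a a1 a2 I I1 I2 : ℝ) (ha : 0 < a) (h1 : 0 < a1) (h2 : 0 < a2) :
    |I/a - (I+(I1+I2))/(a+(a1+a2))| ≤ |I/a - (I+I1)/(a+a1)| + |I/a - (I+I2)/(a+a2)| := by
  have hA1 : 0 < a + a1 := by linarith
  have hA2 : 0 < a + a2 := by linarith
  have hA12 : 0 < a + (a1 + a2) := by linarith
  have e0 : I/a - (I+(I1+I2))/(a+(a1+a2))
      = ((I*a1 - a*I1) + (I*a2 - a*I2))/(a*(a+(a1+a2))) := by
    field_simp; ring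
  have e1 : I/a - (I+I1)/(a+a1) = (I*a1 - a*I1)/(a*(a+a1)) := by
    field_simp; ring
  have e2 : I/a - (I+I2)/(a+a2) = (I*a2 - a*I2)/(a*(a+a2)) := by
    field_simp; ring
  rw [e0, e1, e2, abs_div, abs_div, abs_div, abs_of_pos (mul_pos ha hA12),
    abs_of_pos (mul_pos ha hA1), abs_of_pos (mul_pos ha hA2)]
  calc |I*a1 - a*I1 + (I*a2 - a*I2)| / (a*(a+(a1+a2)))
      ≤ (|I*a1 - a*I1| + |I*a2 - a*I2|) / (a*(a+(a1+a2))) := by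
        gcongr; exact abs_add_le _ _
    _ = |I*a1 - a*I1| / (a*(a+(a1+a2))) + |I*a2 - a*I2| / (a*(a+(a1+a2))) := add_div _ _ _
    _ ≤ |I*a1 - a*I1| / (a*(a+a1)) + |I*a2 - a*I2| / (a*(a+a2)) := by
        gcongr <;> nlinarith

theorem mean_by_measure_uBounded (μ : Measure ℝ)
    (H H₁ H₂ : Set ℝ)
    (hbH : Bornology.IsBounded H) (hb₁ : Bornology.IsBounded H₁)
    (hb₂ : Bornology.IsBounded H₂)
    (hmH : MeasurableSet H) (hm₁ : MeasurableSet H₁) (hm₂ : MeasurableSet H₂)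
    (hd₁ : Disjoint H H₁) (hd₂ : Disjoint H H₂) (hd₁₂ : Disjoint H₁ H₂)
    (hposH : 0 < μ H) (hfinH : μ H < ⊤)
    (hpos₁ : 0 < μ H₁) (hfin₁ : μ H₁ < ⊤)
    (hpos₂ : 0 < μ H₂) (hfin₂ : μ H₂ < ⊤)
    (K : Set ℝ → ℝ) (hK : ∀ A : Set ℝ, K A = (∫ x in A, x ∂μ) / (μ A).toReal) :
    |K H - K (H ∪ H₁ ∪ H₂)| ≤ |K H - K (H ∪ H₁)| + |K H - K (H ∪ H₂)| := by
  have int : ∀ (A : Set ℝ), Bornology.IsBounded A → MeasurableSet A → μ A < ⊤ →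
      IntegrableOn (fun x : ℝ => x) A μ := by
    intro A hb hm hf
    obtain ⟨C, hC⟩ := isBounded_iff_forall_norm_le.mp hb
    exact Measure.integrableOn_of_bounded hf.ne aestronglyMeasurable_id
      ((ae_restrict_mem hm).mono fun x hx => hC x hx)
  have iH := int H hbH hmH hfinH
  have i1 := int H₁ hb₁ hm₁ hfin₁
  have i2 := int H₂ hb₂ hm₂ hfin₂
  have hu1 : ∫ x in H ∪ H₁, x ∂μ = (∫ x in H, x ∂μ) + ∫ x in H₁, x ∂μ :=
    setIntegral_union hd₁ hm₁ iH i1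
  have hu2 : ∫ x in H ∪ H₂, x ∂μ = (∫ x in H, x ∂μ) + ∫ x in H₂, x ∂μ :=
    setIntegral_union hd₂ hm₂ iH i2
  have hd' : Disjoint H (H₁ ∪ H₂) := Set.disjoint_union_right.mpr ⟨hd₁, hd₂⟩
  have hu12 : ∫ x in H ∪ H₁ ∪ H₂, x ∂μ
      = (∫ x in H, x ∂μ) + ((∫ x in H₁, x ∂μ) + ∫ x in H₂, x ∂μ) := by
    rw [Set.union_assoc, setIntegral_union hd' (hm₁.union hm₂) iH (i1.union i2),
      setIntegral_union hd₁₂ hm₂ i1 i2]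
  have hm1 : (μ (H ∪ H₁)).toReal = (μ H).toReal + (μ H₁).toReal := by
    rw [measure_union hd₁ hm₁, ENNReal.toReal_add hfinH.ne hfin₁.ne]
  have hm2 : (μ (H ∪ H₂)).toReal = (μ H).toReal + (μ H₂).toReal := by
    rw [measure_union hd₂ hm₂, ENNReal.toReal_add hfinH.ne hfin₂.ne]
  have hm12 : (μ (H ∪ H₁ ∪ H₂)).toReal
      = (μ H).toReal + ((μ H₁).toReal + (μ H₂).toReal) := by
    rw [Set.union_assoc, measure_union hd' (hm₁.union hm₂),
      measure_union hd₁₂ hm₂,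
      ENNReal.toReal_add hfinH.ne (by simp [measure_union hd₁₂ hm₂,
        ENNReal.add_lt_top.mpr ⟨hfin₁, hfin₂⟩, lt_top_iff_ne_top.mp]),
      ENNReal.toReal_add hfin₁.ne hfin₂.ne]
  rw [hK, hK, hK, hK, hu1, hu2, hu12, hm1, hm2, hm12]
  exact mean_aux _ _ _ _ _ _
    (ENNReal.toReal_pos hposH.ne' hfinH.ne)
    (ENNReal.toReal_pos hpos₁.ne' hfin₁.ne)
    (ENNReal.toReal_pos hpos₂.ne' hfin₂.ne)
end

section
/- Let δ > 0 and let (H_n) be a decreasing sequence (H_{n+1} ⊆ H_n) of nonempty compact subsets of ℝ with H = ⋂_{n=1}^∞ H_n. Then Avg(S(H_n, δ)) → Avg(S(H, δ)) as n → ∞, where S(A, δ) = ⋃_{x ∈ A} S(x, δ) is the open δ-neighbourhood (thickening) of A. -/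
/-!
The thickenings `Tₙ = S(Hₙ, δ)` decrease and are bounded, so the integrals of `x` and of `1` over
them converge to those over `⋂ₙ Tₙ`. By compactness `⋂ₙ Tₙ` lies between `S(H, δ)` and the closed
thickening of `H`, and on the line these two differ only by a countable set: the points at distance
exactly `δ` from `H`, each of which is isolated from one side among them. So `⋂ₙ Tₙ` and `S(H, δ)`
agree almost everywhere and have the same average, which is well defined because `H ≠ ∅`.
-/

open MeasureTheory Filter

open Metric Set Topology

lemma Real.add_mem_or_sub_mem_of_mem_cthickening_diff_thickening {δ : ℝ} {s : Set ℝ}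
    (hs : IsClosed s) (hδ : 0 ≤ δ) {y : ℝ} (hy : y ∈ cthickening δ s \ thickening δ s) :
    y + δ ∈ s ∨ y - δ ∈ s := by
  obtain ⟨hy_c, hy_t⟩ := hy
  rw [hs.cthickening_eq_biUnion_closedBall hδ, mem_iUnion₂] at hy_c
  obtain ⟨x, hx, hyx⟩ := hy_c
  have hδ_le : δ ≤ dist y x := not_lt.1 fun h ↦ hy_t (mem_thickening_iff.2 ⟨x, hx, h⟩)
  rcases abs_eq hδ |>.1 (le_antisymm hyx hδ_le) with h | h
  · exact .inr (by rwa [show y - δ = x by linarith])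
  · exact .inl (by rwa [show y + δ = x by linarith])

/-- If `y + δ ∈ s`, the interval `(y, y + δ)` lies in `thickening δ s`, so `y` is isolated on the
right in this set; symmetrically if `y - δ ∈ s`. -/
lemma Real.countable_cthickening_diff_thickening {δ : ℝ} {s : Set ℝ} (hs : IsClosed s)
    (hδ : 0 < δ) : (cthickening δ s \ thickening δ s).Countable := by
  set D := cthickening δ s \ thickening δ s
  refine (countable_setOfPred_isolated_right_within (s := D)).union
    (countable_setOfPred_isolated_left_within (s := D)) |>.mono fun y hy ↦ ?_
  rcases Real.add_mem_or_sub_mem_of_mem_cthickening_diff_thickening hs hδ.le hy with h | h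
  · refine .inl ⟨hy, empty_mem_iff_bot.1 <| mem_nhdsWithin.2 ⟨Iio (y + δ), isOpen_Iio,
      by simpa using hδ, ?_⟩⟩
    rintro z ⟨hz : z < y + δ, ⟨-, hz_t⟩, hyz : y < z⟩
    refine hz_t <| mem_thickening_iff.2 ⟨y + δ, h, ?_⟩
    rw [Real.dist_eq, abs_lt]
    constructor <;> linarith
  · refine .inr ⟨hy, empty_mem_iff_bot.1 <| mem_nhdsWithin.2 ⟨Ioi (y - δ), isOpen_Ioi,
      by simpa using hδ, ?_⟩⟩
    rintro z ⟨hz : y - δ < z, ⟨-, hz_t⟩, hyz : z < y⟩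
    refine hz_t <| mem_thickening_iff.2 ⟨y - δ, h, ?_⟩
    rw [Real.dist_eq, abs_lt]
    constructor <;> linarith

lemma iInter_thickening_subset_cthickening_iInter {X : Type*} [MetricSpace X] {δ : ℝ}
    {K : ℕ → Set X} (hK : ∀ n, IsCompact (K n)) (hK_anti : Antitone K) :
    ⋂ n, thickening δ (K n) ⊆ cthickening δ (⋂ n, K n) := by
  intro x hx
  have hne : ∀ n, (K n ∩ closedBall x δ).Nonempty := fun n ↦ by
    obtain ⟨z, hz, hxz⟩ := mem_thickening_iff.1 (mem_iInter.1 hx n)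
    exact ⟨z, hz, mem_closedBall_comm.1 hxz.le⟩
  obtain ⟨z, hz⟩ := IsCompact.nonempty_iInter_of_sequence_nonempty_isCompact_isClosed _
    (fun n ↦ inter_subset_inter_left _ (hK_anti n.le_succ)) hne
    ((hK 0).inter_right isClosed_closedBall) (fun n ↦ (hK n).isClosed.inter isClosed_closedBall)
  simp only [← iInter_inter, mem_inter_iff] at hz
  exact mem_cthickening_of_dist_le x z δ _ hz.1 (mem_closedBall'.1 hz.2)

lemma Real.iInter_thickening_ae_eq_thickening_iInter {δ : ℝ} (hδ : 0 < δ) {K : ℕ → Set ℝ}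
    (hK : ∀ n, IsCompact (K n)) (hK_anti : Antitone K) :
    ⋂ n, thickening δ (K n) =ᵐ[volume] thickening δ (⋂ n, K n) := by
  refine ae_eq_set.2 ⟨measure_mono_null (sdiff_subset_sdiff_left
    (iInter_thickening_subset_cthickening_iInter hK hK_anti)) ?_, ?_⟩
  · exact (Real.countable_cthickening_diff_thickening
      (isClosed_iInter fun n ↦ (hK n).isClosed) hδ).measure_zero _
  · have hsub : thickening δ (⋂ n, K n) ⊆ ⋂ n, thickening δ (K n) :=
      subset_iInter fun n ↦ thickening_subset_of_subset δ (iInter_subset K n)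
    rw [sdiff_eq_empty.2 hsub, measure_empty]

lemma avg_congr {s t : Set ℝ} (h : s =ᵐ[volume] t) : avg s = avg t := by
  rw [avg, avg, setIntegral_congr_set h, measure_congr h]

lemma tendsto_avg_iInter_of_antitone {s : ℕ → Set ℝ} (hs : ∀ n, MeasurableSet (s n))
    (hs_anti : Antitone s) (hs_bdd : Bornology.IsBounded (s 0)) (hpos : 0 < volume (⋂ n, s n)) :
    Tendsto (fun n ↦ avg (s n)) atTop (𝓝 (avg (⋂ n, s n))) := by
  have hint : IntegrableOn id (s 0) := (continuous_id.locallyIntegrable.integrableOn_isCompact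
    hs_bdd.isCompact_closure).mono_set subset_closure
  have hnum := tendsto_setIntegral_of_antitone hs hs_anti ⟨0, hint⟩
  have hfin : volume (⋂ n, s n) ≠ ⊤ :=
    ((measure_mono (iInter_subset s 0)).trans_lt hs_bdd.measure_lt_top).ne
  have hden := (ENNReal.tendsto_toReal hfin).comp (tendsto_measure_iInter_atTop
    (fun n ↦ (hs n).nullMeasurableSet) hs_anti ⟨0, hs_bdd.measure_lt_top.ne⟩)
  exact hnum.div hden (ENNReal.toReal_pos hpos.ne' hfin).ne'

theorem avg_thickening_tendsto_of_antitone (δ : ℝ) (hδ : 0 < δ)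
    (Hn : ℕ → Set ℝ) (hne : ∀ n, (Hn n).Nonempty)
    (hcomp : ∀ n, IsCompact (Hn n))
    (hdec : ∀ n, Hn (n + 1) ⊆ Hn n)
    (H : Set ℝ) (hH : H = ⋂ n, Hn n) :
    Tendsto (fun n => avg (Metric.thickening δ (Hn n))) atTop
      (nhds (avg (Metric.thickening δ H))) := by
  subst hH
  have hanti : Antitone Hn := antitone_nat_of_succ_le hdec
  have hH_ne : (⋂ n, Hn n).Nonempty :=
    IsCompact.nonempty_iInter_of_sequence_nonempty_isCompact_isClosed Hn hdec hne (hcomp 0)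
      fun n ↦ (hcomp n).isClosed
  have hae := Real.iInter_thickening_ae_eq_thickening_iInter hδ hcomp hanti
  rw [← avg_congr hae]
  refine tendsto_avg_iInter_of_antitone (fun n ↦ isOpen_thickening.measurableSet)
    (fun m n hmn ↦ thickening_subset_of_subset δ (hanti hmn)) (hcomp 0).isBounded.thickening ?_
  rw [measure_congr hae]
  exact isOpen_thickening.measure_pos volume (thickening_nonempty_iff.2 ⟨hδ, hH_ne⟩)
end

section
/- Let δ > 0 and let H ⊆ ℝ be a nonempty compact set. Then λ(S(H, δ + ε) ∖ S(H, δ − ε)) → 0 as ε → 0+ (taking 0 < ε < δ), where S(A, r) denotes the open r-neighbourhood of A. -/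
open MeasureTheory Filter

lemma sep_countable (δ : ℝ) (hδ : 0 < δ) (A : Set ℝ)
    (hsep : ∀ x ∈ A, ∀ y ∈ A, x ≠ y → 2 * δ ≤ dist x y) : A.Countable := by
  have hdisj : A.PairwiseDisjoint (fun y => Metric.ball y δ) := by
    intro x hx y hy hxy
    exact Metric.ball_disjoint_ball (by linarith [hsep x hx y hy hxy])
  exact hdisj.countable_of_isOpen (fun y _ => Metric.isOpen_ball)
    (fun y _ => ⟨y, Metric.mem_ball_self hδ⟩)

lemma level_countable (δ : ℝ) (hδ : 0 < δ) (H : Set ℝ) (hcomp : IsCompact H) :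
    (Metric.cthickening δ H \ Metric.thickening δ H).Countable := by
  rcases H.eq_empty_or_nonempty with rfl | hne
  · simp
  set T := Metric.cthickening δ H \ Metric.thickening δ H with hT
  have hfar : ∀ y ∈ T, ∀ h ∈ H, δ ≤ dist y h := by
    intro y hy h hh
    by_contra hlt
    push_neg at hlt
    exact hy.2 (Metric.mem_thickening_iff.2 ⟨h, hh, hlt⟩)
  have hex : ∀ y ∈ T, y + δ ∈ H ∨ y - δ ∈ H := by
    intro y hy
    obtain ⟨h, hh, hEq⟩ := hcomp.exists_infDist_eq_dist hne y
    have h1 : Metric.infDist y H ≤ δ := by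
      have := hy.1
      rw [Metric.mem_cthickening_iff] at this
      calc Metric.infDist y H = (EMetric.infEdist y H).toReal := rfl
        _ ≤ (ENNReal.ofReal δ).toReal := ENNReal.toReal_mono ENNReal.ofReal_ne_top this
        _ = δ := ENNReal.toReal_ofReal hδ.le
    have h2 : dist y h = δ := le_antisymm (hEq ▸ h1) (hfar y hy h hh)
    rw [Real.dist_eq] at h2
    rcases (abs_eq hδ.le).1 h2 with h' | h'
    · right; rw [show y - δ = h by linarith]; exact hh
    · left; rw [show y + δ = h by linarith]; exact hh
  -- split T into two separated sets
  have hsub : T ⊆ {y ∈ T | y + δ ∈ H} ∪ {y ∈ T | y - δ ∈ H} := by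
    intro y hy
    rcases hex y hy with h | h
    · exact Or.inl ⟨hy, h⟩
    · exact Or.inr ⟨hy, h⟩
  have hplus : ({y ∈ T | y + δ ∈ H}).Countable := by
    apply sep_countable δ hδ
    rintro x ⟨hxT, hxH⟩ y ⟨hyT, hyH⟩ hxy
    rw [Real.dist_eq]
    rcases lt_or_gt_of_ne hxy with hlt | hlt
    · -- x < y : show 2δ ≤ |x - y| = y - x. x + δ ∈ H, dist y (x+δ) ≥ δ
      have := hfar y hyT (x + δ) hxH
      rw [Real.dist_eq] at this
      rcases le_abs.1 this with h' | h'
      · rw [abs_of_nonpos (by linarith)]; linarith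
      · linarith
    · have := hfar x hxT (y + δ) hyH
      rw [Real.dist_eq] at this
      rcases le_abs.1 this with h' | h'
      · rw [abs_of_nonneg (by linarith)]; linarith
      · linarith
  have hminus : ({y ∈ T | y - δ ∈ H}).Countable := by
    apply sep_countable δ hδ
    rintro x ⟨hxT, hxH⟩ y ⟨hyT, hyH⟩ hxy
    rw [Real.dist_eq]
    rcases lt_or_gt_of_ne hxy with hlt | hlt
    · have := hfar x hxT (y - δ) hyH
      rw [Real.dist_eq] at this
      rcases le_abs.1 this with h' | h'
      · linarith
      · rw [abs_of_nonpos (by linarith)]; linarith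
    · have := hfar y hyT (x - δ) hxH
      rw [Real.dist_eq] at this
      rcases le_abs.1 this with h' | h'
      · linarith
      · rw [abs_of_nonneg (by linarith)]; linarith
  exact Set.Countable.mono hsub (hplus.union hminus)

theorem volume_thickening_annulus_tendsto_zero (δ : ℝ) (hδ : 0 < δ)
    (H : Set ℝ) (hne : H.Nonempty) (hcomp : IsCompact H) :
    Tendsto (fun ε : ℝ =>
        volume (Metric.thickening (δ + ε) H \ Metric.thickening (δ - ε) H))
      (nhdsWithin 0 (Set.Ioo 0 δ)) (nhds 0) := by
  set s : ℕ → Set ℝ := fun n =>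
    Metric.thickening (δ + 1 / (n + 1)) H \ Metric.thickening (δ - 1 / (n + 1)) H with hs
  have hpos : ∀ n : ℕ, (0 : ℝ) < 1 / (n + 1) := fun n => by positivity
  have hm : Antitone s := by
    intro m n hmn
    have h1 : (1 : ℝ) / (n + 1) ≤ 1 / (m + 1) := by
      apply one_div_le_one_div_of_le (by positivity)
      exact_mod_cast by omega
    exact Set.diff_subset_diff (Metric.thickening_mono (by linarith) H)
      (Metric.thickening_mono (by linarith) H)
  have hmeas : ∀ n, NullMeasurableSet (s n) volume := fun n =>
    ((Metric.isOpen_thickening.measurableSet).diff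
      Metric.isOpen_thickening.measurableSet).nullMeasurableSet
  have hfin : ∃ n, volume (s n) ≠ ⊤ := by
    refine ⟨0, ?_⟩
    have : s 0 ⊆ Metric.cthickening (δ + 1) H :=
      (Set.diff_subset).trans (by
        apply Metric.thickening_subset_cthickening_of_le
        norm_num)
    exact ((measure_mono this).trans_lt (hcomp.cthickening.measure_lt_top)).ne
  have hinter : (⋂ n, s n) ⊆ Metric.cthickening δ H \ Metric.thickening δ H := by
    intro x hx
    simp only [Set.mem_iInter, hs, Set.mem_diff] at hx
    constructor
    · rw [Metric.mem_cthickening_iff]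
      have hlt : ∀ n : ℕ, Metric.infDist x H < δ + 1 / (n + 1) := fun n =>
        (Metric.mem_thickening_iff_infDist_lt hne).1 (hx n).1
      have hle : Metric.infDist x H ≤ δ := by
        by_contra hc
        push_neg at hc
        obtain ⟨n, hn⟩ := exists_nat_one_div_lt (sub_pos.2 hc)
        exact absurd (hlt n) (by push_neg; linarith)
      calc EMetric.infEdist x H = ENNReal.ofReal (Metric.infDist x H) :=
            (ENNReal.ofReal_toReal (Metric.infEdist_ne_top hne)).symm
        _ ≤ ENNReal.ofReal δ := ENNReal.ofReal_le_ofReal hle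
    · intro hmem
      have hlt := (Metric.mem_thickening_iff_infDist_lt hne).1 hmem
      obtain ⟨n, hn⟩ := exists_nat_one_div_lt (sub_pos.2 hlt)
      exact (hx n).2 ((Metric.mem_thickening_iff_infDist_lt hne).2 (by linarith))
  have hzero : volume (⋂ n, s n) = 0 := by
    have := (level_countable δ hδ H hcomp).measure_zero volume
    exact measure_mono_null hinter this
  have hseq : Tendsto (fun n => volume (s n)) atTop (nhds 0) := by
    have := tendsto_measure_iInter_atTop (μ := volume) hmeas hm hfin
    rwa [hzero] at this
  rw [ENNReal.tendsto_nhds_zero]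
  intro η hη
  obtain ⟨n, hn⟩ := (ENNReal.tendsto_nhds_zero.1 hseq η hη).exists
  have hev : ∀ᶠ ε in nhdsWithin (0:ℝ) (Set.Ioo 0 δ), ε < 1 / ((n:ℝ) + 1) :=
    eventually_nhdsWithin_of_eventually_nhds (eventually_lt_nhds (hpos n))
  filter_upwards [hev, eventually_mem_nhdsWithin] with ε hε hεI
  have hsub : Metric.thickening (δ + ε) H \ Metric.thickening (δ - ε) H ⊆ s n :=
    Set.diff_subset_diff (Metric.thickening_mono (by linarith) H)
      (Metric.thickening_mono (by linarith [hεI.1]) H)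
  exact (measure_mono hsub).trans hn
end

section
/- Let δ > 0. The mean K(L) = Avg(S(L, δ)) is Hausdorff-continuous on nonempty compact subsets of ℝ: if (H_n) is a sequence of nonempty compact subsets of ℝ and H is a nonempty compact subset of ℝ such that the Hausdorff distance d(H_n, H) → 0, then Avg(S(H_n, δ)) → Avg(S(H, δ)). -/
open MeasureTheory Filter

/-!
Hausdorff convergence `Hₙ → H` gives pointwise convergence `infDist x Hₙ → infDist x H`, so the
indicator of `thickening δ Hₙ` converges to that of `thickening δ H` off the level set
`{x | infDist x H = δ}`. On the line this level set is countable, hence null, and dominated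
convergence gives convergence of both the volume and the first moment of `thickening δ Hₙ`.
-/

open Metric Set Topology

/- A point `x` of the level set has a nearest point `x ± δ` of `closure H`; every point strictly
between them is closer than `δ` to `H`, so `x` is isolated in the level set on that side. -/
theorem countable_setOf_infDist_eq {H : Set ℝ} (hH : H.Nonempty) {δ : ℝ} (hδ : 0 < δ) :
    {x | infDist x H = δ}.Countable := by
  set L := {x | infDist x H = δ}
  refine ((countable_setOfPred_isolated_right_within (s := L)).union
    (countable_setOfPred_isolated_left_within (s := L))).mono fun x hx => ?_
  obtain ⟨y, hyH, hxy⟩ := exists_mem_closure_infDist_eq_dist hH x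
  have hz : ∀ z, infDist z H ≤ |z - y| := fun z => by
    rw [← infDist_closure, ← Real.dist_eq]; exact infDist_le_dist_of_mem hyH
  rw [show infDist x H = δ from hx, Real.dist_eq] at hxy
  rcases (abs_eq hδ.le).1 hxy.symm with h | h
  · refine Or.inr ⟨hx, ?_⟩
    rw [← empty_mem_iff_bot, mem_nhdsWithin]
    refine ⟨Ioi y, isOpen_Ioi, show y < x by linarith, fun z ⟨hyz, hzL, hzx⟩ => ?_⟩
    have := hz z
    rw [abs_of_pos (by linarith [mem_Ioi.1 hyz])] at this
    linarith [show infDist z H = δ from hzL, mem_Iio.1 hzx]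
  · refine Or.inl ⟨hx, ?_⟩
    rw [← empty_mem_iff_bot, mem_nhdsWithin]
    refine ⟨Iio y, isOpen_Iio, show x < y by linarith, fun z ⟨hzy, hzL, hxz⟩ => ?_⟩
    have := hz z
    rw [abs_of_neg (by linarith [mem_Iio.1 hzy])] at this
    linarith [show infDist z H = δ from hzL, mem_Ioi.1 hxz]

section HausdorffLimit

variable {X ι : Type*} [PseudoMetricSpace X] {l : Filter ι} {s : ι → Set X} {t : Set X}

theorem tendsto_infDist_of_tendsto_hausdorffDist (hfin : ∀ i, hausdorffEDist (s i) t ≠ ⊤)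
    (hlim : Tendsto (fun i => hausdorffDist (s i) t) l (𝓝 0)) (x : X) :
    Tendsto (fun i => infDist x (s i)) l (𝓝 (infDist x t)) := by
  refine tendsto_iff_dist_tendsto_zero.2 <| squeeze_zero (fun _ => dist_nonneg) (fun i => ?_) hlim
  have h₁ := infDist_le_infDist_add_hausdorffDist (x := x) (hfin i)
  have h₂ := infDist_le_infDist_add_hausdorffDist (x := x) (s := t) (t := s i)
    (by rw [hausdorffEDist_comm]; exact hfin i)
  rw [hausdorffDist_comm] at h₂
  exact abs_sub_le_iff.2 ⟨by linarith, by linarith⟩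

theorem eventually_mem_thickening_iff (hs : ∀ i, (s i).Nonempty) (ht : t.Nonempty)
    (hfin : ∀ i, hausdorffEDist (s i) t ≠ ⊤)
    (hlim : Tendsto (fun i => hausdorffDist (s i) t) l (𝓝 0)) {δ : ℝ} {x : X}
    (hx : infDist x t ≠ δ) :
    ∀ᶠ i in l, x ∈ thickening δ (s i) ↔ x ∈ thickening δ t := by
  have hconv := tendsto_infDist_of_tendsto_hausdorffDist hfin hlim x
  simp only [mem_thickening_iff_infDist_lt (hs _), mem_thickening_iff_infDist_lt ht]
  rcases hx.lt_or_gt with h | h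
  · filter_upwards [hconv.eventually_lt_const h] with i hi using iff_of_true hi h
  · filter_upwards [hconv.eventually_const_lt h] with i hi using iff_of_false hi.not_gt h.not_gt

theorem eventually_thickening_subset_thickening (hs : ∀ i, (s i).Nonempty) (ht : t.Nonempty)
    (hfin : ∀ i, hausdorffEDist (s i) t ≠ ⊤)
    (hlim : Tendsto (fun i => hausdorffDist (s i) t) l (𝓝 0)) {δ ε : ℝ} (hδε : δ < ε) :
    ∀ᶠ i in l, thickening δ (s i) ⊆ thickening ε t := by
  filter_upwards [hlim.eventually_lt_const (sub_pos.2 hδε)] with i hi x hx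
  rw [mem_thickening_iff_infDist_lt (hs i)] at hx
  rw [mem_thickening_iff_infDist_lt ht]
  linarith [infDist_le_infDist_add_hausdorffDist (x := x) (hfin i)]

theorem tendsto_setIntegral_thickening [MeasurableSpace X] [OpensMeasurableSpace X]
    {E : Type*} [NormedAddCommGroup E] [NormedSpace ℝ E] [l.IsCountablyGenerated]
    (hs : ∀ i, (s i).Nonempty) (ht : t.Nonempty) (hfin : ∀ i, hausdorffEDist (s i) t ≠ ⊤)
    (hlim : Tendsto (fun i => hausdorffDist (s i) t) l (𝓝 0))
    {μ : Measure X} {δ ε : ℝ} (hδε : δ < ε) (hlevel : μ {x | infDist x t = δ} = 0)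
    {f : X → E} (hf : IntegrableOn f (thickening ε t) μ) :
    Tendsto (fun i => ∫ x in thickening δ (s i), f x ∂μ) l
      (𝓝 (∫ x in thickening δ t, f x ∂μ)) := by
  simp_rw [← integral_indicator isOpen_thickening.measurableSet]
  have hsub := eventually_thickening_subset_thickening hs ht hfin hlim hδε
  refine tendsto_integral_filter_of_dominated_convergence ((thickening ε t).indicator (‖f ·‖))
    ?_ ?_ (IntegrableOn.integrable_indicator hf.norm isOpen_thickening.measurableSet) ?_
  · filter_upwards [hsub] with i hi
    exact ((hf.mono_set hi).integrable_indicator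
      isOpen_thickening.measurableSet).aestronglyMeasurable
  · filter_upwards [hsub] with i hi
    refine ae_of_all _ fun x => ?_
    rw [norm_indicator_eq_indicator_norm]
    exact indicator_le_indicator_of_subset hi (fun _ => norm_nonneg _) x
  · filter_upwards [measure_eq_zero_iff_ae_notMem.1 hlevel] with x hx
    refine tendsto_const_nhds.congr' ?_
    filter_upwards [eventually_mem_thickening_iff hs ht hfin hlim hx] with i hi
    exact indicator_eq_indicator hi.symm rfl

end HausdorffLimit

theorem avg_thickening_hausdorff_continuous (δ : ℝ) (hδ : 0 < δ)
    (Hn : ℕ → Set ℝ) (H : Set ℝ)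
    (hne : ∀ n, (Hn n).Nonempty) (hcomp : ∀ n, IsCompact (Hn n))
    (hHne : H.Nonempty) (hHcomp : IsCompact H)
    (hconv : Tendsto (fun n => Metric.hausdorffDist (Hn n) H) atTop (nhds 0)) :
    Tendsto (fun n => avg (Metric.thickening δ (Hn n))) atTop
      (nhds (avg (Metric.thickening δ H))) := by
  have hfin n : hausdorffEDist (Hn n) H ≠ ⊤ :=
    hausdorffEDist_ne_top_of_nonempty_of_bounded (hne n) hHne (hcomp n).isBounded
      hHcomp.isBounded
  have hlevel : volume {x | infDist x H = δ} = 0 :=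
    (countable_setOf_infDist_eq hHne hδ).measure_zero _
  have hintegral {f : ℝ → ℝ} (hf : Continuous f) :=
    tendsto_setIntegral_thickening hne hHne hfin hconv (lt_add_one δ) hlevel
      ((hf.continuousOn.integrableOn_compact hHcomp.cthickening).mono_set
        (thickening_subset_cthickening _ _))
  have hvol := hintegral (f := fun _ => 1) continuous_const
  simp only [setIntegral_const, smul_eq_mul, mul_one] at hvol
  have hvol_ne : volume.real (thickening δ H) ≠ 0 :=
    (ENNReal.toReal_pos
      (isOpen_thickening.measure_ne_zero _ (hHne.mono (self_subset_thickening hδ H)))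
      hHcomp.isBounded.thickening.measure_lt_top.ne).ne'
  simpa only [avg, measureReal_def, Pi.div_def] using
    (hintegral (f := fun x => x) continuous_id).div hvol hvol_ne
end
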